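/- arXiv:1412.7833 — 10 statements merged into one kernel-verified Lean document; each statement's English description precedes it below -/
import Mathlib

section
/- Let U ⊆ ℂ be open with 0 ∈ U, and let a₁₃, a₁₄, a₃₄ : U → ℂ. Suppose φ, b₁₃, b₁₄ : U → ℂ are complex-differentiable on U with φ(0) = b₁₃(0) = b₁₄(0) = 0 and at every point of U: φ′ = a₃₄, b₁₃′ = a₁₃ cos φ + a₁₄ sin φ, and b₁₄′ = −a₁₃ sin φ + a₁₄ cos φ. Then the matrix-valued function F₀₁ := Ĥ(b₁₃, b₁₄) · T̃(φ) satisfies F₀₁(0) = I₄ and is complex-differentiable on U with derivative F₀₁′ = F₀₁ · A₁(a₁₃, a₁₄, a₃₄) at every point; i.e., F₀₁ solves the linear ODE F₀₁⁻¹ dF₀₁ = A₁(a₁₃, a₁₄, a₃₄) dz with initial condition F₀₁(0) = I₄. -/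
open Matrix

noncomputable section

/-- `Ĥ(b,c)`: the 4×4 complex matrix with rows
`(1+s, s, b, c)`, `(−s, 1−s, −b, −c)`, `(b, b, 1, 0)`, `(c, c, 0, 1)`, where `s = (b²+c²)/2`. -/
def Hhat (b c : ℂ) : Matrix (Fin 4) (Fin 4) ℂ :=
  !![1 + (b ^ 2 + c ^ 2) / 2, (b ^ 2 + c ^ 2) / 2, b, c;
     -((b ^ 2 + c ^ 2) / 2), 1 - (b ^ 2 + c ^ 2) / 2, -b, -c;
     b, b, 1, 0;
     c, c, 0, 1]

/-- `T̃(φ)`: identity in the upper-left 2×2 block, rotation by `φ` in the lower-right block. -/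
def Ttilde (φ : ℂ) : Matrix (Fin 4) (Fin 4) ℂ :=
  !![1, 0, 0, 0;
     0, 1, 0, 0;
     0, 0, Complex.cos φ, Complex.sin φ;
     0, 0, -Complex.sin φ, Complex.cos φ]

/-- `A₁(p,q,r)`: the 4×4 complex matrix with rows
`(0,0,p,q)`, `(0,0,−p,−q)`, `(p,p,0,r)`, `(q,q,−r,0)`. -/
def A1mat (p q r : ℂ) : Matrix (Fin 4) (Fin 4) ℂ :=
  !![0, 0, p, q;
     0, 0, -p, -q;
     p, p, 0, r;
     q, q, -r, 0]

lemma HT (b c t : ℂ) :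
    Hhat b c * Ttilde t =
    !![1 + (b ^ 2 + c ^ 2) / 2, (b ^ 2 + c ^ 2) / 2,
         b * Complex.cos t - c * Complex.sin t, b * Complex.sin t + c * Complex.cos t;
       -((b ^ 2 + c ^ 2) / 2), 1 - (b ^ 2 + c ^ 2) / 2,
         -(b * Complex.cos t - c * Complex.sin t), -(b * Complex.sin t + c * Complex.cos t);
       b, b, Complex.cos t, Complex.sin t;
       c, c, -Complex.sin t, Complex.cos t] := by
  ext i j
  fin_cases i <;> fin_cases j <;>
    simp [Hhat, Ttilde, Matrix.mul_apply, Fin.sum_univ_four, Matrix.vecHead, Matrix.vecTail] <;> ring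

lemma HTA (b c t p q r : ℂ) :
    Hhat b c * Ttilde t * A1mat p q r =
    !![p * (b * Complex.cos t - c * Complex.sin t) + q * (b * Complex.sin t + c * Complex.cos t),
       p * (b * Complex.cos t - c * Complex.sin t) + q * (b * Complex.sin t + c * Complex.cos t),
       p - r * (b * Complex.sin t + c * Complex.cos t),
       q + r * (b * Complex.cos t - c * Complex.sin t);
       -(p * (b * Complex.cos t - c * Complex.sin t) + q * (b * Complex.sin t + c * Complex.cos t)),
       -(p * (b * Complex.cos t - c * Complex.sin t) + q * (b * Complex.sin t + c * Complex.cos t)),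
       -p + r * (b * Complex.sin t + c * Complex.cos t),
       -q - r * (b * Complex.cos t - c * Complex.sin t);
       p * Complex.cos t + q * Complex.sin t, p * Complex.cos t + q * Complex.sin t,
       -r * Complex.sin t, r * Complex.cos t;
       -p * Complex.sin t + q * Complex.cos t, -p * Complex.sin t + q * Complex.cos t,
       -r * Complex.cos t, -r * Complex.sin t] := by
  rw [HT]
  ext i j
  fin_cases i <;> fin_cases j <;>
    simp [A1mat, Matrix.mul_apply, Fin.sum_univ_four, Matrix.vecHead, Matrix.vecTail] <;> ring

/-- the matrix function `F₀₁ = Ĥ(b₁₃, b₁₄) · T̃(φ)` satisfies `F₀₁(0) = I₄` and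
solves `F₀₁′ = F₀₁ · A₁(a₁₃, a₁₄, a₃₄)` on `U`. -/
theorem stmt0 (U : Set ℂ) (hU : IsOpen U) (h0U : (0 : ℂ) ∈ U)
    (a13 a14 a34 φ b13 b14 : ℂ → ℂ)
    (hφ0 : φ 0 = 0) (hb130 : b13 0 = 0) (hb140 : b14 0 = 0)
    (hφ : ∀ z ∈ U, HasDerivAt φ (a34 z) z)
    (hb13 : ∀ z ∈ U,
      HasDerivAt b13 (a13 z * Complex.cos (φ z) + a14 z * Complex.sin (φ z)) z)
    (hb14 : ∀ z ∈ U,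
      HasDerivAt b14 (-(a13 z) * Complex.sin (φ z) + a14 z * Complex.cos (φ z)) z) :
    Hhat (b13 0) (b14 0) * Ttilde (φ 0) = (1 : Matrix (Fin 4) (Fin 4) ℂ) ∧
    ∀ z ∈ U, ∀ i j : Fin 4,
      HasDerivAt (fun w => (Hhat (b13 w) (b14 w) * Ttilde (φ w)) i j)
        ((Hhat (b13 z) (b14 z) * Ttilde (φ z) * A1mat (a13 z) (a14 z) (a34 z)) i j) z := by
  constructor
  · rw [hφ0, hb130, hb140]
    ext i j
    fin_cases i <;> fin_cases j <;>
      simp [Hhat, Ttilde, Matrix.mul_apply, Fin.sum_univ_four, Matrix.one_apply,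
        Matrix.vecHead, Matrix.vecTail]
  · intro z hz i j
    have hB := hb13 z hz
    have hC := hb14 z hz
    have hco := (hφ z hz).ccos
    have hsi := (hφ z hz).csin
    rw [HTA]
    simp only [HT]
    obtain rfl | rfl | rfl | rfl : i = 0 ∨ i = 1 ∨ i = 2 ∨ i = 3 := by omega
    all_goals obtain rfl | rfl | rfl | rfl : j = 0 ∨ j = 1 ∨ j = 2 ∨ j = 3 := by omega
    all_goals simp only [Matrix.cons_val', Matrix.cons_val_zero, Matrix.cons_val_one,
        Matrix.head_cons, Matrix.empty_val', Matrix.cons_val_fin_one, Matrix.head_fin_const,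
        Matrix.cons_val_two, Matrix.cons_val_three, Matrix.tail_cons, Matrix.of_apply, Matrix.cons_val_succ,
        Matrix.vecHead, Matrix.vecTail, Function.comp]
    · exact ((((hB.pow 2).add (hC.pow 2)).div_const 2).const_add 1).congr_deriv (by ring)
    · exact (((hB.pow 2).add (hC.pow 2)).div_const 2).congr_deriv (by ring)
    · exact ((hB.mul hco).sub (hC.mul hsi)).congr_deriv (by linear_combination (a13 z) * Complex.cos_sq_add_sin_sq (φ z))
    · exact ((hB.mul hsi).add (hC.mul hco)).congr_deriv (by linear_combination (a14 z) * Complex.cos_sq_add_sin_sq (φ z))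
    · exact ((((hB.pow 2).add (hC.pow 2)).div_const 2).neg).congr_deriv (by ring)
    · exact ((((hB.pow 2).add (hC.pow 2)).div_const 2).const_sub 1).congr_deriv (by ring)
    · exact (((hB.mul hco).sub (hC.mul hsi)).neg).congr_deriv (by linear_combination (-(a13 z)) * Complex.cos_sq_add_sin_sq (φ z))
    · exact (((hB.mul hsi).add (hC.mul hco)).neg).congr_deriv (by linear_combination (-(a14 z)) * Complex.cos_sq_add_sin_sq (φ z))
    · exact hB.congr_deriv (by ring)
    · exact hB.congr_deriv (by ring)
    · exact hco.congr_deriv (by ring)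
    · exact hsi.congr_deriv (by ring)
    · exact hC.congr_deriv (by ring)
    · exact hC.congr_deriv (by ring)
    · exact hsi.neg.congr_deriv (by ring)
    · exact hco.congr_deriv (by ring)
end
end

section
/- Let U ⊆ ℂ be open and let b, c : U → ℂ be complex-differentiable on U. Then the matrix-valued function z ↦ Ĥ(b(z), c(z)) is complex-differentiable on U and satisfies Ĥ(b,c)′ = Ĥ(b,c) · N(b′, c′) at every point of U. -/
open Matrix

noncomputable section

/-- `N(p,q)`: the 4×4 complex matrix with rows
`(0,0,p,q)`, `(0,0,−p,−q)`, `(p,p,0,0)`, `(q,q,0,0)`. -/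
def Nmat (p q : ℂ) : Matrix (Fin 4) (Fin 4) ℂ :=
  !![0, 0, p, q;
     0, 0, -p, -q;
     p, p, 0, 0;
     q, q, 0, 0]

/-! Writing `s = (b² + c²)/2`, we have `Ĥ(b,c) = 1 + N(b,c) + s J` for a constant matrix `J`,
with `N(b,c) N(p,q) = (bp + cq) J` and `J N(p,q) = 0`. Hence both `Ĥ(b,c)′` and
`Ĥ(b,c) N(b′,c′)` equal `N(b′,c′) + (bb′ + cc′) J`. -/

def Jmat : Matrix (Fin 4) (Fin 4) ℂ :=
  !![1, 1, 0, 0;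
     -1, -1, 0, 0;
     0, 0, 0, 0;
     0, 0, 0, 0]

theorem Nmat_eq_smul_add_smul (p q : ℂ) : Nmat p q = p • Nmat 1 0 + q • Nmat 0 1 := by
  ext i j
  fin_cases i <;> fin_cases j <;> simp [Nmat]

theorem Hhat_eq_one_add_Nmat_add_smul_Jmat (b c : ℂ) :
    Hhat b c = 1 + Nmat b c + ((b ^ 2 + c ^ 2) / 2) • Jmat := by
  ext i j
  fin_cases i <;> fin_cases j <;> simp [Hhat, Nmat, Jmat]; ring

theorem Nmat_mul_Nmat (b c p q : ℂ) : Nmat b c * Nmat p q = (b * p + c * q) • Jmat := by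
  ext i j
  fin_cases i <;> fin_cases j <;> simp [Nmat, Jmat, Matrix.mul_apply, Fin.sum_univ_four] <;> ring

theorem Jmat_mul_Nmat (p q : ℂ) : Jmat * Nmat p q = 0 := by
  ext i j
  fin_cases i <;> fin_cases j <;> simp [Nmat, Jmat, Matrix.mul_apply, Fin.sum_univ_four]

theorem Hhat_mul_Nmat (b c p q : ℂ) :
    Hhat b c * Nmat p q = Nmat p q + (b * p + c * q) • Jmat := by
  rw [Hhat_eq_one_add_Nmat_add_smul_Jmat, add_mul, add_mul, one_mul, Nmat_mul_Nmat,
    smul_mul_assoc, Jmat_mul_Nmat, smul_zero, add_zero]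

theorem hasDerivAt_Hhat_apply {b c : ℂ → ℂ} {b' c' z : ℂ} (hb : HasDerivAt b b' z)
    (hc : HasDerivAt c c' z) (i j : Fin 4) :
    HasDerivAt (fun w => Hhat (b w) (c w) i j) ((Hhat (b z) (c z) * Nmat b' c') i j) z := by
  have hs : HasDerivAt (fun w => (b w ^ 2 + c w ^ 2) / 2) (b z * b' + c z * c') z := by
    refine (((hb.pow 2).add (hc.pow 2)).div_const 2).congr_deriv ?_
    push_cast
    ring
  have hN : HasDerivAt (fun w => Nmat (b w) (c w) i j) (Nmat b' c' i j) z := by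
    simp only [Nmat_eq_smul_add_smul (b _), Nmat_eq_smul_add_smul b', Matrix.add_apply,
      Matrix.smul_apply]
    exact (hb.mul_const _).add (hc.mul_const _)
  rw [Hhat_mul_Nmat]
  simp only [Hhat_eq_one_add_Nmat_add_smul_Jmat, Matrix.add_apply, Matrix.smul_apply, smul_eq_mul]
  exact (hN.const_add _).add (hs.mul_const _)

theorem stmt1_general (U : Set ℂ) (b c b' c' : ℂ → ℂ)
    (hb : ∀ z ∈ U, HasDerivAt b (b' z) z)
    (hc : ∀ z ∈ U, HasDerivAt c (c' z) z) :
    ∀ z ∈ U, ∀ i j : Fin 4,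
      HasDerivAt (fun w => Hhat (b w) (c w) i j)
        ((Hhat (b z) (c z) * Nmat (b' z) (c' z)) i j) z :=
  fun z hz => hasDerivAt_Hhat_apply (hb z hz) (hc z hz)

/-- if `b, c` are complex-differentiable on open `U` with derivatives `b′, c′`,
then `z ↦ Ĥ(b(z), c(z))` is complex-differentiable on `U` with
`Ĥ(b,c)′ = Ĥ(b,c) · N(b′, c′)`. -/
theorem stmt1 (U : Set ℂ) (hU : IsOpen U) (b c b' c' : ℂ → ℂ)
    (hb : ∀ z ∈ U, HasDerivAt b (b' z) z)
    (hc : ∀ z ∈ U, HasDerivAt c (c' z) z) :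
    ∀ z ∈ U, ∀ i j : Fin 4,
      HasDerivAt (fun w => Hhat (b w) (c w) i j)
        ((Hhat (b z) (c z) * Nmat (b' z) (c' z)) i j) z :=
  stmt1_general U b c b' c' hb hc
end
end

section
/- For all φ, p, q ∈ ℂ, the matrix T̃(φ) is invertible with inverse T̃(−φ), and T̃(φ)⁻¹ · N(p cos φ + q sin φ, −p sin φ + q cos φ) · T̃(φ) = N(p, q). -/
open Matrix

noncomputable section

set_option maxHeartbeats 1000000 in
lemma Ttilde_mul_neg (φ : ℂ) : Ttilde φ * Ttilde (-φ) = 1 := by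
  have h := Complex.sin_sq_add_cos_sq φ
  ext i j
  fin_cases i <;> fin_cases j <;>
    simp [Ttilde, Matrix.mul_apply, Fin.sum_univ_four, Matrix.one_apply,
      Matrix.vecHead, Matrix.vecTail, Complex.cos_neg, Complex.sin_neg] <;>
    (first | ring1 | (ring_nf; linear_combination h))

lemma Ttilde_neg_mul (φ : ℂ) : Ttilde (-φ) * Ttilde φ = 1 := by
  have := Ttilde_mul_neg (-φ)
  rwa [neg_neg] at this

lemma Ttilde_inv (φ : ℂ) : (Ttilde φ)⁻¹ = Ttilde (-φ) :=
  Matrix.inv_eq_right_inv (Ttilde_mul_neg φ)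

set_option maxHeartbeats 1000000 in
/-- `T̃(φ)` is invertible with inverse `T̃(−φ)`, and
`T̃(φ)⁻¹ · N(p cos φ + q sin φ, −p sin φ + q cos φ) · T̃(φ) = N(p, q)`. -/
theorem stmt2 (φ p q : ℂ) :
    Ttilde φ * Ttilde (-φ) = 1 ∧ Ttilde (-φ) * Ttilde φ = 1 ∧ (Ttilde φ)⁻¹ = Ttilde (-φ) ∧
    (Ttilde φ)⁻¹ *
        Nmat (p * Complex.cos φ + q * Complex.sin φ) (-p * Complex.sin φ + q * Complex.cos φ) *
        Ttilde φ =
      Nmat p q := by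
  refine ⟨Ttilde_mul_neg φ, Ttilde_neg_mul φ, Ttilde_inv φ, ?_⟩
  rw [Ttilde_inv]
  have h := Complex.sin_sq_add_cos_sq φ
  ext i j
  fin_cases i <;> fin_cases j <;>
    simp [Ttilde, Nmat, Matrix.mul_apply, Fin.sum_univ_four, Matrix.vecHead, Matrix.vecTail,
      Complex.cos_neg, Complex.sin_neg] <;>
    (first
      | ring1
      | (ring_nf; linear_combination h)
      | (ring_nf; linear_combination p * h)
      | (ring_nf; linear_combination q * h)
      | (ring_nf; linear_combination (-p) * h)
      | (ring_nf; linear_combination (-q) * h))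
end
end

section
/- Let n ≥ 1 and let β, k, k̂ ∈ ℂⁿ. Let B be the 4×n complex matrix whose four rows are √2·β, −√2·β, −k, and −k̂. Then Bᵗ I_{1,3} B = 0 if and only if k̂ = i·k or k̂ = −i·k. -/
open Matrix

noncomputable section

/-- `I_{1,3} = diag(−1,1,1,1)`. -/
def I13 : Matrix (Fin 4) (Fin 4) ℂ :=
  !![-1, 0, 0, 0;
     0, 1, 0, 0;
     0, 0, 1, 0;
     0, 0, 0, 1]

/-- for the 4×n matrix `B` with rows `√2·β`, `−√2·β`, `−k`, `−k̂`,
one has `Bᵗ I_{1,3} B = 0` iff `k̂ = i·k` or `k̂ = −i·k`. -/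
theorem stmt3 (n : ℕ) (hn : 1 ≤ n) (β k khat : Fin n → ℂ)
    (B : Matrix (Fin 4) (Fin n) ℂ)
    (hB : B = Matrix.of
      ![fun j => (Real.sqrt 2 : ℂ) * β j,
        fun j => -((Real.sqrt 2 : ℂ) * β j),
        fun j => -(k j),
        fun j => -(khat j)]) :
    Bᵀ * I13 * B = 0 ↔
      (∀ j, khat j = Complex.I * k j) ∨ (∀ j, khat j = -Complex.I * k j) := by
  have key : ∀ a b, (Bᵀ * I13 * B) a b = k a * k b + khat a * khat b := by
    intro a b
    subst hB
    simp [Matrix.mul_apply, Fin.sum_univ_four, I13, Matrix.transpose_apply, Matrix.vecHead, Matrix.vecTail]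
  constructor
  · intro h
    have key' : ∀ a b, k a * k b + khat a * khat b = 0 := by
      intro a b
      have := key a b
      rw [h] at this
      simpa using this.symm
    have each : ∀ a, khat a = Complex.I * k a ∨ khat a = -Complex.I * k a := by
      intro a
      have h0 : (khat a - Complex.I * k a) * (khat a + Complex.I * k a) = 0 := by
        have := key' a a
        have hI := Complex.I_mul_I
        ring_nf
        ring_nf at this
        rw [Complex.I_sq]
        linear_combination this
      rcases mul_eq_zero.mp h0 with h1 | h1
      · left; exact sub_eq_zero.mp h1
      · right
        have := eq_neg_of_add_eq_zero_left h1
        rw [this]; ring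
    by_cases hall : ∀ j, khat j = Complex.I * k j
    · exact Or.inl hall
    · right
      push_neg at hall
      obtain ⟨a, ha⟩ := hall
      have haneg : khat a = -Complex.I * k a := (each a).resolve_left ha
      have hka : k a ≠ 0 := by
        intro h0
        apply ha
        rw [haneg, h0]; ring
      intro j
      rcases each j with hj | hj
      · have := key' a j
        rw [haneg, hj] at this
        have h2 : k a * k j * 2 = 0 := by
          have hI := Complex.I_mul_I
          linear_combination this + k a * k j * hI
        have hkj : k j = 0 := by
          rcases mul_eq_zero.mp h2 with h3 | h3
          · exact (mul_eq_zero.mp h3).resolve_left hka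
          · exact absurd h3 two_ne_zero
        rw [hj, hkj]; ring
      · exact hj
  · intro h
    ext a b
    rcases h with h | h <;>
    · rw [key, h a, h b]
      simp only [Matrix.zero_apply]
      have hI := Complex.I_mul_I
      linear_combination (k a * k b) * hI
end
end

section
/- Let n ≥ 1 and let B be a 4×n complex matrix whose second row equals the negative of its first row and whose fourth row equals i times its third row. Then for all b, c, φ ∈ ℂ and every n×n complex matrix C, the matrix Ĥ(b,c) · T̃(φ) · B · C again has its second row equal to the negative of its first row and its fourth row equal to i times its third row. -/
open Matrix

noncomputable section

/-- if the second row of `B` is the negative of the first and the fourth row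
is `i` times the third, then the same holds for `Ĥ(b,c) · T̃(φ) · B · C`. -/
theorem stmt4 (n : ℕ) (hn : 1 ≤ n) (B : Matrix (Fin 4) (Fin n) ℂ)
    (h2 : ∀ j, B 1 j = -B 0 j) (h4 : ∀ j, B 3 j = Complex.I * B 2 j)
    (b c φ : ℂ) (C : Matrix (Fin n) (Fin n) ℂ) :
    (∀ j, (Hhat b c * Ttilde φ * B * C) 1 j = -(Hhat b c * Ttilde φ * B * C) 0 j) ∧
    (∀ j, (Hhat b c * Ttilde φ * B * C) 3 j = Complex.I * (Hhat b c * Ttilde φ * B * C) 2 j) := by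
  have key2 : ∀ j, (Hhat b c * Ttilde φ * B) 1 j = -(Hhat b c * Ttilde φ * B) 0 j := by
    intro j
    simp [Hhat, Ttilde, mul_apply, Fin.sum_univ_four, h2, h4]
    ring
  have key4 : ∀ j, (Hhat b c * Ttilde φ * B) 3 j = Complex.I * (Hhat b c * Ttilde φ * B) 2 j := by
    intro j
    simp [Hhat, Ttilde, mul_apply, Fin.sum_univ_four, h2, h4]
    linear_combination (-(Complex.sin φ * B 2 j)) * Complex.I_sq
  set M := Hhat b c * Ttilde φ * B with hM
  constructor <;> intro j <;> simp only [mul_apply]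
  · rw [← Finset.sum_neg_distrib]
    exact Finset.sum_congr rfl fun k _ => by rw [key2]; ring
  · rw [Finset.mul_sum]
    exact Finset.sum_congr rfl fun k _ => by rw [key4]; ring
end
end

section
/- Let n ≥ 1 and let v₁, …, vₙ ∈ ℂ⁴ be vectors whose first coordinate is 0. Then vⱼᵗ I_{1,3} v_l = 0 for all 1 ≤ j, l ≤ n if and only if there exist a vector w ∈ ℂ⁴ and scalars g₁, …, gₙ ∈ ℂ with vⱼ = gⱼ·w for all j, where w is either of the form (0, 2g₀, 1 − g₀², i(1 + g₀²)) for some g₀ ∈ ℂ or equals (0, 0, 1, −i). -/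
open Matrix

noncomputable section

/-- The bilinear form `(v, w) ↦ vᵗ I_{1,3} w` on `ℂ⁴`. -/
def bform (v w : Fin 4 → ℂ) : ℂ := v ⬝ᵥ I13.mulVec w

/-!
On vectors with vanishing first coordinate, `bform` is the complex Euclidean form
`x² + y² + z²` on `ℂ³`. Its null cone is the cone over a smooth conic, parametrized by `ℙ¹`:
every isotropic vector is a multiple of `nullVec g = (0, 2g, 1 − g², i(1 + g²))` for some
`g ∈ ℂ`, or of `nullVecInf = (0, 0, 1, −i)` (the point `g = ∞`). Since
`bform (nullVec g) (nullVec h) = −2(g − h)²` and `bform (nullVec g) nullVecInf = 2`,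
two nonzero isotropic vectors are orthogonal only if they lie on the same line.
-/

lemma bform_apply (v w : Fin 4 → ℂ) :
    bform v w = -(v 0 * w 0) + v 1 * w 1 + v 2 * w 2 + v 3 * w 3 := by
  simp [bform, I13, mulVec, dotProduct, Fin.sum_univ_four]

lemma bform_comm (v w : Fin 4 → ℂ) : bform v w = bform w v := by
  rw [bform_apply, bform_apply]
  ring

lemma bform_smul_left (c : ℂ) (v w : Fin 4 → ℂ) : bform (c • v) w = c * bform v w := by
  simp only [bform, smul_dotProduct, smul_eq_mul]

lemma bform_smul_right (c : ℂ) (v w : Fin 4 → ℂ) : bform v (c • w) = c * bform v w := by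
  simp only [bform, mulVec_smul, dotProduct_smul, smul_eq_mul]

def nullVec (g : ℂ) : Fin 4 → ℂ := ![0, 2 * g, 1 - g ^ 2, Complex.I * (1 + g ^ 2)]

def nullVecInf : Fin 4 → ℂ := ![0, 0, 1, -Complex.I]

def IsNullDirection (w : Fin 4 → ℂ) : Prop := (∃ g, w = nullVec g) ∨ w = nullVecInf

lemma bform_nullVec_nullVec (g h : ℂ) : bform (nullVec g) (nullVec h) = -2 * (g - h) ^ 2 := by
  simp only [bform_apply, nullVec, cons_val]
  linear_combination (1 + g ^ 2) * (1 + h ^ 2) * Complex.I_sq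

lemma bform_nullVec_nullVecInf (g : ℂ) : bform (nullVec g) nullVecInf = 2 := by
  simp only [bform_apply, nullVec, nullVecInf, cons_val]
  linear_combination -(1 + g ^ 2) * Complex.I_sq

lemma bform_nullVecInf_nullVecInf : bform nullVecInf nullVecInf = 0 := by
  simp only [bform_apply, nullVecInf, cons_val]
  linear_combination Complex.I_sq

lemma IsNullDirection.bform_self {w : Fin 4 → ℂ} (hw : IsNullDirection w) : bform w w = 0 := by
  rcases hw with ⟨g, rfl⟩ | rfl
  · simp [bform_nullVec_nullVec]
  · exact bform_nullVecInf_nullVecInf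

lemma IsNullDirection.eq_of_bform_eq_zero {w w' : Fin 4 → ℂ} (hw : IsNullDirection w)
    (hw' : IsNullDirection w') (h : bform w w' = 0) : w = w' := by
  rcases hw with ⟨g, rfl⟩ | rfl <;> rcases hw' with ⟨g', rfl⟩ | rfl
  · rw [bform_nullVec_nullVec] at h
    have : g - g' = 0 := by simpa using h
    rw [sub_eq_zero.mp this]
  · norm_num [bform_nullVec_nullVecInf] at h
  · rw [bform_comm, bform_nullVec_nullVecInf] at h
    norm_num at h
  · rfl

lemma exists_isNullDirection_smul {v : Fin 4 → ℂ} (hv0 : v 0 = 0) (hv : bform v v = 0) :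
    ∃ (μ : ℂ) (w : Fin 4 → ℂ), IsNullDirection w ∧ v = μ • w := by
  have hq : v 1 ^ 2 + v 2 ^ 2 + v 3 ^ 2 = 0 := by
    rw [bform_apply, hv0] at hv
    linear_combination hv
  by_cases hs : v 2 - Complex.I * v 3 = 0
  · have h1 : v 1 = 0 := pow_eq_zero_iff two_ne_zero |>.mp <| by
      linear_combination hq - (v 2 + Complex.I * v 3) * hs - v 3 ^ 2 * Complex.I_sq
    refine ⟨v 2, nullVecInf, Or.inr rfl, ?_⟩
    ext i
    fin_cases i
    · simp [nullVecInf, hv0]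
    · simp [nullVecInf, h1]
    · simp [nullVecInf]
    · simp only [nullVecInf, Fin.reduceFinMk, Pi.smul_apply, cons_val, smul_eq_mul]
      linear_combination Complex.I * hs + v 3 * Complex.I_sq
  · -- stereographic projection from `nullVecInf`
    set s := v 2 - Complex.I * v 3
    refine ⟨s / 2, nullVec (v 1 / s), Or.inl ⟨_, rfl⟩, ?_⟩
    ext i
    fin_cases i
    · simp [nullVec, hv0]
    · simp only [nullVec, Fin.mk_one, Pi.smul_apply, cons_val, smul_eq_mul]
      field_simp
    · simp only [nullVec, Fin.reduceFinMk, Pi.smul_apply, cons_val, smul_eq_mul]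
      field_simp
      linear_combination hq - v 3 ^ 2 * Complex.I_sq
    · simp only [nullVec, Fin.reduceFinMk, Pi.smul_apply, cons_val, smul_eq_mul]
      field_simp
      linear_combination -Complex.I * hq + (2 * v 2 * v 3 - Complex.I * v 3 ^ 2) * Complex.I_sq

lemma IsNullDirection.exists_eq_smul {w v : Fin 4 → ℂ} (hw : IsNullDirection w)
    (hv0 : v 0 = 0) (hv : bform v v = 0) (hwv : bform w v = 0) : ∃ c : ℂ, v = c • w := by
  obtain ⟨μ, w', hw', rfl⟩ := exists_isNullDirection_smul hv0 hv
  by_cases hμ : μ = 0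
  · exact ⟨0, by simp [hμ]⟩
  rw [bform_smul_right] at hwv
  exact ⟨μ, by rw [hw.eq_of_bform_eq_zero hw' ((mul_eq_zero.mp hwv).resolve_left hμ)]⟩

theorem stmt10_general (n : ℕ) (v : Fin n → (Fin 4 → ℂ)) (hv : ∀ j, v j 0 = 0) :
    (∀ j l, bform (v j) (v l) = 0) ↔
      ∃ (w : Fin 4 → ℂ) (g : Fin n → ℂ),
        (∀ j, v j = g j • w) ∧
        ((∃ g0 : ℂ, w = ![0, 2 * g0, 1 - g0 ^ 2, Complex.I * (1 + g0 ^ 2)]) ∨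
          w = ![0, 0, 1, -Complex.I]) := by
  constructor
  · intro h
    by_cases hzero : ∀ j, v j = 0
    · exact ⟨nullVecInf, 0, fun j => by simp [hzero j], Or.inr rfl⟩
    obtain ⟨j₀, hj₀⟩ := not_forall.mp hzero
    obtain ⟨μ₀, w, hw, hvj₀⟩ := exists_isNullDirection_smul (hv j₀) (h j₀ j₀)
    have hμ₀ : μ₀ ≠ 0 := by
      rintro rfl
      exact hj₀ (by simpa using hvj₀)
    have hwv (l : Fin n) : bform w (v l) = 0 := by
      have := h j₀ l
      rwa [hvj₀, bform_smul_left, mul_eq_zero, or_iff_right hμ₀] at this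
    choose g hg using fun l => hw.exists_eq_smul (hv l) (h l l) (hwv l)
    exact ⟨w, g, hg, hw⟩
  · rintro ⟨w, g, hg, hw⟩ j l
    rw [hg j, hg l, bform_smul_left, bform_smul_right, IsNullDirection.bform_self hw]
    ring

/-- vectors `v₁, …, vₙ ∈ ℂ⁴` with vanishing first coordinate are pairwise
isotropic for `I_{1,3}` iff they are all multiples of a single vector of the form
`(0, 2g₀, 1 − g₀², i(1 + g₀²))` or of `(0, 0, 1, −i)`. -/
theorem stmt10 (n : ℕ) (hn : 1 ≤ n) (v : Fin n → (Fin 4 → ℂ)) (hv : ∀ j, v j 0 = 0) :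
    (∀ j l, bform (v j) (v l) = 0) ↔
      ∃ (w : Fin 4 → ℂ) (g : Fin n → ℂ),
        (∀ j, v j = g j • w) ∧
        ((∃ g0 : ℂ, w = ![0, 2 * g0, 1 - g0 ^ 2, Complex.I * (1 + g0 ^ 2)]) ∨
          w = ![0, 0, 1, -Complex.I]) :=
  stmt10_general n v hv
end
end

section
/- Let U ⊆ ℂ be open, connected, with 0 ∈ U. Let f = ((f₁, f₂), (f₃, f₄)) : U → Mat(2×2, ℂ) and g = ((g₁, g₂), (g₃, g₄)) : U → Mat(2×2, ℂ) be complex-differentiable with f(0) = 0, g(0) = 0, and g′ = −f·(f′)^♯, where Y^♯ := J₂ Yᵗ J₂ for a 2×2 complex matrix Y. Then throughout U: g₂ = −f₁f₂, g₃ = −f₃f₄, and g₁ + g₄ = −f₁f₄ − f₂f₃. -/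
open Matrix

noncomputable section

/-- `J₂ = ((0,1),(1,0))`. -/
def J2 : Matrix (Fin 2) (Fin 2) ℂ := !![0, 1; 1, 0]

/-- `Y^♯ = J₂ Yᵗ J₂` for a 2×2 matrix `Y`. -/
def sharp2 (Y : Matrix (Fin 2) (Fin 2) ℂ) : Matrix (Fin 2) (Fin 2) ℂ := J2 * Yᵀ * J2

/-!
Since `Y^♯ = ((Y₄, Y₂), (Y₃, Y₁))`, the entries `(0,1)` and `(1,0)` and the trace of `f·(f′)^♯` are
the product-rule derivatives of `f₁f₂`, `f₃f₄` and `f₁f₄ + f₂f₃`. So `g₂ + f₁f₂`, `g₃ + f₃f₄` and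
`g₁ + g₄ + f₁f₄ + f₂f₃` have zero derivative on the connected open set `U` and vanish at `0`.
-/

theorem IsOpen.eqOn_of_hasDerivAt {𝕜 G : Type*} [RCLike 𝕜] [NormedAddCommGroup G]
    [NormedSpace 𝕜 G] {s : Set 𝕜} (hs : IsOpen s) (hs' : IsPreconnected s) {φ ψ φ' : 𝕜 → G}
    (hφ : ∀ x ∈ s, HasDerivAt φ (φ' x) x) (hψ : ∀ x ∈ s, HasDerivAt ψ (φ' x) x) {x₀ : 𝕜}
    (hx₀ : x₀ ∈ s) (h : φ x₀ = ψ x₀) : s.EqOn φ ψ :=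
  hs.eqOn_of_deriv_eq hs' (fun x hx ↦ (hφ x hx).differentiableAt.differentiableWithinAt)
    (fun x hx ↦ (hψ x hx).differentiableAt.differentiableWithinAt)
    (fun x hx ↦ by rw [(hφ x hx).deriv, (hψ x hx).deriv]) hx₀ h

theorem sharp2_eq (Y : Matrix (Fin 2) (Fin 2) ℂ) : sharp2 Y = !![Y 1 1, Y 0 1; Y 1 0, Y 0 0] := by
  ext i j
  fin_cases i <;> fin_cases j <;>
    simp [sharp2, J2, mul_apply, vecMul, dotProduct, Fin.sum_univ_two]

section ProductRule

variable {f f' : ℂ → Matrix (Fin 2) (Fin 2) ℂ} {z : ℂ}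
  (hf : ∀ i j, HasDerivAt (fun w ↦ f w i j) (f' z i j) z)
include hf

theorem hasDerivAt_mul_sharp2_apply_zero_one :
    HasDerivAt (fun w ↦ f w 0 0 * f w 0 1) ((f z * sharp2 (f' z)) 0 1) z := by
  refine ((hf 0 0).fun_mul (hf 0 1)).congr_deriv ?_
  simp only [sharp2_eq, mul_apply, Fin.sum_univ_two, of_apply, cons_val', cons_val_zero,
    cons_val_one, cons_val_fin_one]
  ring

theorem hasDerivAt_mul_sharp2_apply_one_zero :
    HasDerivAt (fun w ↦ f w 1 0 * f w 1 1) ((f z * sharp2 (f' z)) 1 0) z := by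
  refine ((hf 1 0).fun_mul (hf 1 1)).congr_deriv ?_
  simp only [sharp2_eq, mul_apply, Fin.sum_univ_two, of_apply, cons_val', cons_val_zero,
    cons_val_one, cons_val_fin_one]
  ring

theorem hasDerivAt_trace_mul_sharp2 :
    HasDerivAt (fun w ↦ f w 0 0 * f w 1 1 + f w 0 1 * f w 1 0)
      ((f z * sharp2 (f' z)) 0 0 + (f z * sharp2 (f' z)) 1 1) z := by
  refine (((hf 0 0).fun_mul (hf 1 1)).fun_add ((hf 0 1).fun_mul (hf 1 0))).congr_deriv ?_
  simp only [sharp2_eq, mul_apply, Fin.sum_univ_two, of_apply, cons_val', cons_val_zero,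
    cons_val_one, cons_val_fin_one]
  ring

end ProductRule

/-- if `f(0) = 0`, `g(0) = 0` and `g′ = −f·(f′)^♯` on the open connected set `U`,
then `g₂ = −f₁f₂`, `g₃ = −f₃f₄` and `g₁ + g₄ = −f₁f₄ − f₂f₃` throughout `U`. -/
theorem stmt12 (U : Set ℂ) (hU : IsOpen U) (hUconn : IsConnected U) (h0U : (0 : ℂ) ∈ U)
    (f f' g : ℂ → Matrix (Fin 2) (Fin 2) ℂ)
    (hf0 : f 0 = 0) (hg0 : g 0 = 0)
    (hf : ∀ z ∈ U, ∀ i j, HasDerivAt (fun w => f w i j) (f' z i j) z)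
    (hg : ∀ z ∈ U, ∀ i j, HasDerivAt (fun w => g w i j) ((-(f z * sharp2 (f' z))) i j) z) :
    ∀ z ∈ U,
      g z 0 1 = -(f z 0 0 * f z 0 1) ∧
      g z 1 0 = -(f z 1 0 * f z 1 1) ∧
      g z 0 0 + g z 1 1 = -(f z 0 0 * f z 1 1) - f z 0 1 * f z 1 0 := by
  have hconn := hUconn.isPreconnected
  have h01 : U.EqOn (fun w ↦ g w 0 1) (fun w ↦ -(f w 0 0 * f w 0 1)) :=
    hU.eqOn_of_hasDerivAt hconn (hg · · 0 1)
      (fun z hz ↦ (hasDerivAt_mul_sharp2_apply_zero_one (hf z hz)).neg) h0U (by simp [hf0, hg0])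
  have h10 : U.EqOn (fun w ↦ g w 1 0) (fun w ↦ -(f w 1 0 * f w 1 1)) :=
    hU.eqOn_of_hasDerivAt hconn (hg · · 1 0)
      (fun z hz ↦ (hasDerivAt_mul_sharp2_apply_one_zero (hf z hz)).neg) h0U (by simp [hf0, hg0])
  have htr : U.EqOn (fun w ↦ g w 0 0 + g w 1 1)
      (fun w ↦ -(f w 0 0 * f w 1 1 + f w 0 1 * f w 1 0)) :=
    hU.eqOn_of_hasDerivAt hconn (fun z hz ↦ (hg z hz 0 0).fun_add (hg z hz 1 1))
      (fun z hz ↦ (hasDerivAt_trace_mul_sharp2 (hf z hz)).neg.congr_deriv (neg_add _ _)) h0U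
      (by simp [hf0, hg0])
  exact fun z hz ↦ ⟨h01 hz, h10 hz, (htr hz).trans (neg_add' _ _)⟩
end
end

section
/- Let f₁, f₂, f₃, f₄, g₁, g₂, g₄ ∈ ℂ and set g₃ := −f₃f₄. Put f = ((f₁, f₂), (f₃, f₄)), g = ((g₁, g₂), (g₃, g₄)), f^♯ = J₂ fᵗ J₂, and define the 2×2 matrix d := I₂ + E₄·conj(f^♯)ᵗ·f^♯ + E₄·conj(g)ᵗ·E₁·g. Then d = (((1+|f₃|²)(1+|f₄|²), conj(f₃)f₁ + conj(f₄)f₂ + conj(g₃)g₄), (0, 1)); in particular d is invertible. Moreover, the matrix u^♯ := (f^♯ − conj(f)ᵗ·E₁·g)·d⁻¹ has first column equal to (f₄/(1+|f₄|²), f₃/(1+|f₃|²))ᵗ. -/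
open Matrix

noncomputable section

/-- `E₁ = ((0,0),(0,1))`. -/
def E1 : Matrix (Fin 2) (Fin 2) ℂ := !![0, 0; 0, 1]
/-- `E₄ = ((1,0),(0,0))`. -/
def E4 : Matrix (Fin 2) (Fin 2) ℂ := !![1, 0; 0, 0]
/-- Entrywise complex conjugation of a matrix. -/
def conjM {m n : Type*} (M : Matrix m n ℂ) : Matrix m n ℂ := M.map (starRingEnd ℂ)

/-!
Conjugating by `J₂` swaps the diagonal entries, so `f^♯ = ((f₄, f₂), (f₃, f₁))` and every matrix
involved is an explicit product of `2 × 2` matrices. The matrix `d` is upper triangular with second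
row `(0, 1)`, and for `g₃ = −f₃f₄` its corner entry factors:
`1 + |f₃|² + |f₄|² + |f₃f₄|² = (1 + |f₃|²)(1 + |f₄|²)`. Hence the first column of `u^♯` is the first
column of `f^♯ − conj(f)ᵗ E₁ g`, namely `(f₄(1 + |f₃|²), f₃(1 + |f₄|²))`, divided by that entry.
-/

open ComplexConjugate

section FinTwo

variable {α : Type*}

theorem transpose_fin_two_of (a b c d : α) : !![a, b; c, d]ᵀ = !![a, c; b, d] := by
  ext i j; fin_cases i <;> fin_cases j <;> rfl

theorem add_fin_two_of [Add α] (a b c d a' b' c' d' : α) :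
    !![a, b; c, d] + !![a', b'; c', d'] = !![a + a', b + b'; c + c', d + d'] := by
  ext i j; fin_cases i <;> fin_cases j <;> rfl

theorem sub_fin_two_of [Sub α] (a b c d a' b' c' d' : α) :
    !![a, b; c, d] - !![a', b'; c', d'] = !![a - a', b - b'; c - c', d - d'] := by
  ext i j; fin_cases i <;> fin_cases j <;> rfl

theorem mul_inv_fin_two_of_apply_zero {K : Type*} [Field K] (M : Matrix (Fin 2) (Fin 2) K)
    (a b : K) (i : Fin 2) : (M * !![a, b; 0, 1]⁻¹) i 0 = M i 0 / a := by
  rw [inv_def, det_fin_two_of, adjugate_fin_two_of, Ring.inverse_eq_inv', eta_fin_two M]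
  fin_cases i <;> simp [div_eq_mul_inv]

end FinTwo

theorem conjM_fin_two_of (a b c d : ℂ) :
    conjM !![a, b; c, d] = !![conj a, conj b; conj c, conj d] := by
  ext i j; fin_cases i <;> fin_cases j <;> rfl

theorem J2_mul_transpose_mul_J2 (a b c d : ℂ) : J2 * !![a, b; c, d]ᵀ * J2 = !![d, b; c, a] := by
  simp [J2, transpose_fin_two_of]

theorem one_add_E4_mul_add_E4_mul_E1_mul (a b c d g₁ g₂ g₃ g₄ : ℂ) :
    1 + E4 * (conjM !![a, b; c, d])ᵀ * !![a, b; c, d]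
        + E4 * (conjM !![g₁, g₂; g₃, g₄])ᵀ * E1 * !![g₁, g₂; g₃, g₄] =
      !![1 + conj a * a + conj c * c + conj g₃ * g₃, conj a * b + conj c * d + conj g₃ * g₄;
        0, 1] := by
  simp only [E4, E1, conjM_fin_two_of, transpose_fin_two_of, mul_fin_two, one_fin_two,
    add_fin_two_of, one_mul, zero_mul, mul_one, mul_zero, add_zero, zero_add]
  congr 1; ring_nf

theorem sub_conj_transpose_mul_E1_mul (a b c d f₁ f₂ f₃ f₄ g₁ g₂ g₃ g₄ : ℂ) :
    !![a, b; c, d] - (conjM !![f₁, f₂; f₃, f₄])ᵀ * E1 * !![g₁, g₂; g₃, g₄] =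
      !![a - conj f₃ * g₃, b - conj f₃ * g₄; c - conj f₄ * g₃, d - conj f₄ * g₄] := by
  simp only [E1, conjM_fin_two_of, transpose_fin_two_of, mul_fin_two, sub_fin_two_of]
  congr 1; simp

theorem ofReal_one_add_norm_sq_ne_zero (z : ℂ) : ((1 + ‖z‖ ^ 2 : ℝ) : ℂ) ≠ 0 :=
  Complex.ofReal_ne_zero.mpr (by positivity)

theorem one_add_conj_mul_self_add_neg_mul_eq (x y : ℂ) :
    1 + conj y * y + conj x * x + conj (-(x * y)) * -(x * y) =
      (((1 + ‖x‖ ^ 2) * (1 + ‖y‖ ^ 2) : ℝ) : ℂ) := by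
  simp only [mul_neg, neg_mul, neg_neg, map_neg, Complex.conj_mul', norm_mul]
  push_cast; ring

theorem sub_conj_mul_neg_mul (x y : ℂ) :
    y - conj x * -(x * y) = ((1 + ‖x‖ ^ 2 : ℝ) : ℂ) * y := by
  rw [mul_neg, sub_neg_eq_add, ← mul_assoc, Complex.conj_mul']
  push_cast; ring

/-- with `g₃ = −f₃f₄`, the matrix
`d = I₂ + E₄ conj(f^♯)ᵗ f^♯ + E₄ conj(g)ᵗ E₁ g` equals
`(((1+|f₃|²)(1+|f₄|²), conj(f₃)f₁ + conj(f₄)f₂ + conj(g₃)g₄), (0, 1))`, is invertible, and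
`u^♯ = (f^♯ − conj(f)ᵗ E₁ g) d⁻¹` has first column `(f₄/(1+|f₄|²), f₃/(1+|f₃|²))ᵗ`. -/
theorem stmt13 (f₁ f₂ f₃ f₄ g₁ g₂ g₄ : ℂ) (g₃ : ℂ) (hg₃ : g₃ = -(f₃ * f₄))
    (f g fsh d ush : Matrix (Fin 2) (Fin 2) ℂ)
    (hf : f = !![f₁, f₂; f₃, f₄]) (hg : g = !![g₁, g₂; g₃, g₄])
    (hfsh : fsh = J2 * fᵀ * J2)
    (hd : d = 1 + E4 * (conjM fsh)ᵀ * fsh + E4 * (conjM g)ᵀ * E1 * g)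
    (hush : ush = (fsh - (conjM f)ᵀ * E1 * g) * d⁻¹) :
    d = !![((((1 + ‖f₃‖ ^ 2) * (1 + ‖f₄‖ ^ 2) : ℝ)) : ℂ),
            starRingEnd ℂ f₃ * f₁ + starRingEnd ℂ f₄ * f₂ + starRingEnd ℂ g₃ * g₄;
           0, 1] ∧
    IsUnit d ∧
    ush 0 0 = f₄ / (((1 + ‖f₄‖ ^ 2 : ℝ)) : ℂ) ∧
    ush 1 0 = f₃ / (((1 + ‖f₃‖ ^ 2 : ℝ)) : ℂ) := by
  subst hg₃ hf hg hfsh hd hush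
  rw [J2_mul_transpose_mul_J2, one_add_E4_mul_add_E4_mul_E1_mul,
    one_add_conj_mul_self_add_neg_mul_eq, add_comm (conj f₄ * f₂), mul_inv_fin_two_of_apply_zero,
    mul_inv_fin_two_of_apply_zero, sub_conj_transpose_mul_E1_mul]
  have ha₃ := ofReal_one_add_norm_sq_ne_zero f₃
  have ha₄ := ofReal_one_add_norm_sq_ne_zero f₄
  refine ⟨rfl, ?_, ?_, ?_⟩
  · rw [isUnit_iff_isUnit_det, det_fin_two_of, isUnit_iff_ne_zero, mul_one, mul_zero, sub_zero,
      Complex.ofReal_mul]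
    exact mul_ne_zero ha₃ ha₄
  all_goals simp only [of_apply, cons_val', cons_val_zero, cons_val_one, empty_val',
    cons_val_fin_one, Complex.ofReal_mul]
  · rw [sub_conj_mul_neg_mul, mul_div_mul_left _ _ ha₃]
  · rw [mul_comm f₃ f₄, sub_conj_mul_neg_mul, mul_comm, mul_div_mul_right _ _ ha₄]
end
end

section
/- Let M be a 4×4 complex matrix satisfying: (i) M₃₁ = M₃₂ = M₄₁ = M₄₂ = 0; (ii) M = Ĵ₄ · conj(M)ᵗ · Ĵ₄; (iii) Mᵗ J₄ M = J₄. Then M is upper triangular with M₂₃ = 0; the entries M₂₂ and M₃₃ are real and satisfy M₂₂M₃₃ = 1; M₂₄ = conj(M₁₂), M₃₄ = conj(M₁₃), M₄₄ = conj(M₁₁); |M₁₁| = 1; conj(M₁₃)·M₂₂ = −M₁₂·conj(M₁₁); and conj(M₁₄)·M₂₂ = |M₁₂|². -/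
/-!
Both `Ĵ₄` and `J₄` are permutation matrices (of the transposition `(0 3)` and of the reversal
`k ↦ 3 - k`), so hypothesis (ii) says `M i j = conj (M (σ j) (σ i))` with `σ = (0 3)` and (iii)
says `∑ₖ M (3-k) i · M k j = J₄ i j`. The symmetry (ii) transports the vanishing lower-left
block to `M₁₀ = M₁₂ = M₃₂ = 0`, makes `M₁₁, M₂₂` real and expresses the last column through the
first row. Inserting this into the entries `(0,3)`, `(1,2)`, `(1,3)`, `(3,3)` of (iii) gives
`|M₀₀|² = 1`, `M₁₁M₂₂ = 1` and two relations from which `conj(M₀₃)·M₁₁ = |M₀₁|²` follows.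
-/

open Matrix

noncomputable section

/-- `J₄`: the 4×4 matrix with ones on the antidiagonal. -/
def J4 : Matrix (Fin 4) (Fin 4) ℂ :=
  !![0, 0, 0, 1;
     0, 0, 1, 0;
     0, 1, 0, 0;
     1, 0, 0, 0]

/-- `Ĵ₄`: the permutation matrix exchanging the first and fourth coordinates. -/
def Jhat4 : Matrix (Fin 4) (Fin 4) ℂ :=
  !![0, 0, 0, 1;
     0, 1, 0, 0;
     0, 0, 1, 0;
     1, 0, 0, 0]

end

open ComplexConjugate Equiv

theorem Matrix.permMatrix_mul_mul_permMatrix_apply {n R : Type*} [Fintype n] [DecidableEq n]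
    [NonAssocSemiring R] (σ τ : Perm n) (A : Matrix n n R) (i j : n) :
    (σ.permMatrix R * A * τ.permMatrix R) i j = A (σ i) (τ.symm j) := by
  rw [PEquiv.toMatrix_toPEquiv_mul, PEquiv.mul_toMatrix_toPEquiv]
  rfl

theorem Complex.norm_eq_one_of_mul_conj_eq_one {z : ℂ} (h : z * conj z = 1) : ‖z‖ = 1 := by
  rw [Complex.mul_conj'] at h
  exact (pow_eq_one_iff_of_nonneg (norm_nonneg z) two_ne_zero).mp (by exact_mod_cast h)

theorem Jhat4_eq_permMatrix : Jhat4 = (swap 0 3 : Perm (Fin 4)).permMatrix ℂ := by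
  ext i j
  fin_cases i <;> fin_cases j <;> simp [Jhat4, PEquiv.toMatrix_apply, swap_apply_def]

theorem J4_eq_permMatrix : J4 = (Fin.revPerm : Perm (Fin 4)).permMatrix ℂ := by
  ext i j
  fin_cases i <;> fin_cases j <;> simp [J4, PEquiv.toMatrix_apply]

theorem Jhat4_mul_mul_Jhat4_apply (A : Matrix (Fin 4) (Fin 4) ℂ) (i j : Fin 4) :
    (Jhat4 * A * Jhat4) i j = A (swap 0 3 i) (swap 0 3 j) := by
  rw [Jhat4_eq_permMatrix, permMatrix_mul_mul_permMatrix_apply, symm_swap]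

theorem apply_eq_conj_apply_swap_of_eq_Jhat4_mul_conjM_transpose_mul_Jhat4
    {M : Matrix (Fin 4) (Fin 4) ℂ} (h : M = Jhat4 * (conjM M)ᵀ * Jhat4) (i j : Fin 4) :
    M i j = conj (M (swap 0 3 j) (swap 0 3 i)) := by
  conv_lhs => rw [h, Jhat4_mul_mul_Jhat4_apply]
  rfl

theorem transpose_mul_J4_mul_apply (M : Matrix (Fin 4) (Fin 4) ℂ) (i j : Fin 4) :
    (Mᵀ * J4 * M) i j = M 3 i * M 0 j + M 2 i * M 1 j + M 1 i * M 2 j + M 0 i * M 3 j := by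
  rw [J4_eq_permMatrix, PEquiv.mul_toMatrix_toPEquiv, mul_apply, Fin.sum_univ_four]
  rfl

theorem conj_mul_eq_norm_sq_of_relations {a b c d p : ℂ} (ha : a * conj a = 1)
    (hp : conj p = p) (hc : conj c * p = -(b * conj a)) (hd : d * conj a + conj b * conj c = 0) :
    conj d * p = ((‖b‖ ^ 2 : ℝ) : ℂ) := by
  have hc' : c * p = -(conj b * a) := by
    simpa [hp] using congrArg conj hc
  have hd' : conj d * a + b * c = 0 := by
    simpa using congrArg conj hd
  rw [Complex.ofReal_pow, ← Complex.mul_conj']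
  linear_combination conj a * p * hd' - b * conj a * hc' + (b * conj b - conj d * p) * ha

/-- structure of a 4×4 matrix `M` with vanishing lower-left 2×2 block satisfying
`M = Ĵ₄ conj(M)ᵗ Ĵ₄` and `Mᵗ J₄ M = J₄`. -/
theorem stmt15 (M : Matrix (Fin 4) (Fin 4) ℂ)
    (h1 : M 2 0 = 0 ∧ M 2 1 = 0 ∧ M 3 0 = 0 ∧ M 3 1 = 0)
    (h2 : M = Jhat4 * (conjM M)ᵀ * Jhat4)
    (h3 : Mᵀ * J4 * M = J4) :
    (M 1 0 = 0 ∧ M 2 0 = 0 ∧ M 2 1 = 0 ∧ M 3 0 = 0 ∧ M 3 1 = 0 ∧ M 3 2 = 0) ∧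
    M 1 2 = 0 ∧
    ((M 1 1).im = 0 ∧ (M 2 2).im = 0) ∧
    M 1 1 * M 2 2 = 1 ∧
    M 1 3 = starRingEnd ℂ (M 0 1) ∧
    M 2 3 = starRingEnd ℂ (M 0 2) ∧
    M 3 3 = starRingEnd ℂ (M 0 0) ∧
    ‖M 0 0‖ = 1 ∧
    starRingEnd ℂ (M 0 2) * M 1 1 = -(M 0 1 * starRingEnd ℂ (M 0 0)) ∧
    starRingEnd ℂ (M 0 3) * M 1 1 = ((‖M 0 1‖ ^ 2 : ℝ) : ℂ) := by
  obtain ⟨h20, h21, h30, h31⟩ := h1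
  have hsym := apply_eq_conj_apply_swap_of_eq_Jhat4_mul_conjM_transpose_mul_Jhat4 h2
  have hJ (i j : Fin 4) : M 3 i * M 0 j + M 2 i * M 1 j + M 1 i * M 2 j + M 0 i * M 3 j = J4 i j := by
    rw [← transpose_mul_J4_mul_apply, h3]
  have m10 : M 1 0 = 0 := by simpa [swap_apply_def, h31] using hsym 1 0
  have m12 : M 1 2 = 0 := by simpa [swap_apply_def, h21] using hsym 1 2
  have m32 : M 3 2 = 0 := by simpa [swap_apply_def, h20] using hsym 3 2
  have r11 : conj (M 1 1) = M 1 1 := by simpa [swap_apply_def] using (hsym 1 1).symm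
  have r22 : conj (M 2 2) = M 2 2 := by simpa [swap_apply_def] using (hsym 2 2).symm
  have m13 : M 1 3 = conj (M 0 1) := by simpa [swap_apply_def] using hsym 1 3
  have m23 : M 2 3 = conj (M 0 2) := by simpa [swap_apply_def] using hsym 2 3
  have m33 : M 3 3 = conj (M 0 0) := by simpa [swap_apply_def] using hsym 3 3
  have k03 : M 0 0 * conj (M 0 0) = 1 := by
    simpa [J4, h20, h30, m10, m33] using hJ 0 3
  have k12 : M 1 1 * M 2 2 = 1 := by
    simpa [J4, h21, h31, m32] using hJ 1 2
  have k13 : conj (M 0 2) * M 1 1 = -(M 0 1 * conj (M 0 0)) := by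
    have h : M 1 1 * conj (M 0 2) + M 0 1 * conj (M 0 0) = 0 := by
      simpa [J4, h21, h31, m23, m33] using hJ 1 3
    linear_combination h
  have k33 : M 0 3 * conj (M 0 0) + conj (M 0 1) * conj (M 0 2) = 0 := by
    have h : conj (M 0 0) * M 0 3 + conj (M 0 2) * conj (M 0 1) + conj (M 0 1) * conj (M 0 2)
        + M 0 3 * conj (M 0 0) = 0 := by
      simpa [J4, m13, m23, m33] using hJ 3 3
    linear_combination h / 2
  exact ⟨⟨m10, h20, h21, h30, h31, m32⟩, m12,
    ⟨Complex.conj_eq_iff_im.mp r11, Complex.conj_eq_iff_im.mp r22⟩, k12, m13, m23, m33,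
    Complex.norm_eq_one_of_mul_conj_eq_one k03, k13,
    conj_mul_eq_norm_sq_of_relations k03 r11 k13 k33⟩
end

section
/- Let U ⊆ ℂ ≅ ℝ² be open and connected, let N ≥ 1, and let Y : U → ℝ^N be continuously differentiable with Y(p) ≠ 0 for every p ∈ U. Suppose there exist functions r, s : U → ℝ such that at every point of U the partial derivatives satisfy ∂Y/∂x = r·Y and ∂Y/∂y = s·Y. Then the direction of Y is constant: there exist a vector v ∈ ℝ^N and a function c : U → ℝ with c(p) ≠ 0 for all p ∈ U such that Y(p) = c(p)·v for every p ∈ U. -/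
/-!
If every derivative of a nowhere-vanishing map `Y` points along `Y` itself, then for any linear
form `φ` with `φ (Y x) ≠ 0` the normalized map `(φ ∘ Y)⁻¹ • Y` has zero derivative near `x`, so
the line spanned by `Y` is locally constant. On a connected domain it is then constant, and
`Y = c • v` with `v` any value of `Y`.
-/

open Filter Topology Submodule

theorem hasFDerivAt_inv_smul_zero_of_fderiv_mem_span {𝕜 E F : Type*}
    [NontriviallyNormedField 𝕜] [NormedAddCommGroup E] [NormedSpace 𝕜 E] [NormedAddCommGroup F]
    [NormedSpace 𝕜 F] {Y : E → F} {φ : F →L[𝕜] 𝕜} {x : E} (hY : DifferentiableAt 𝕜 Y x)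
    (hφ : φ (Y x) ≠ 0) (hY' : ∀ w, fderiv 𝕜 Y x w ∈ 𝕜 ∙ Y x) :
    HasFDerivAt (fun y => (φ (Y y))⁻¹ • Y y) (0 : E →L[𝕜] F) x := by
  have hφY : HasFDerivAt (fun y => φ (Y y)) (φ.comp (fderiv 𝕜 Y x)) x :=
    φ.hasFDerivAt.comp x hY.hasFDerivAt
  refine (((hasDerivAt_inv hφ).comp_hasFDerivAt x hφY).smul hY.hasFDerivAt).congr_fderiv ?_
  ext w
  obtain ⟨a, ha⟩ := mem_span_singleton.mp (hY' w)
  simp only [add_apply, smul_apply, ContinuousLinearMap.smulRight_apply,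
    ContinuousLinearMap.comp_apply, Function.comp_apply, zero_apply, ← ha, map_smul, smul_eq_mul,
    smul_smul, ← add_smul]
  convert zero_smul 𝕜 (Y x) using 2
  field_simp
  ring

section

variable {𝕜 E F : Type*} [RCLike 𝕜] [NormedAddCommGroup E] [NormedSpace 𝕜 E]
  [NormedAddCommGroup F] [NormedSpace 𝕜 F] {Y : E → F} {U : Set E}

theorem eventually_span_singleton_eq_of_fderiv_mem_span (hU : IsOpen U)
    (hY : DifferentiableOn 𝕜 Y U) (hY' : ∀ x ∈ U, ∀ w, fderiv 𝕜 Y x w ∈ 𝕜 ∙ Y x) {x : E}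
    (hx : x ∈ U) (hYx : Y x ≠ 0) :
    ∀ᶠ y in 𝓝 x, (𝕜 ∙ Y y) = (𝕜 ∙ Y x) := by
  obtain ⟨φ, hφ⟩ := SeparatingDual.exists_ne_zero (R := 𝕜) hYx
  set V := U ∩ (fun y => φ (Y y)) ⁻¹' {0}ᶜ
  have hV : IsOpen V :=
    (φ.continuous.comp_continuousOn hY.continuousOn).isOpen_inter_preimage hU isOpen_compl_singleton
  have hZ : ∀ y ∈ V, HasFDerivAt (fun y => (φ (Y y))⁻¹ • Y y) (0 : E →L[𝕜] F) y := fun y hy =>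
    hasFDerivAt_inv_smul_zero_of_fderiv_mem_span (hY.differentiableAt (hU.mem_nhds hy.1)) hy.2
      (hY' y hy.1)
  -- the mean value theorem is stated for real normed spaces
  let _ : NormedSpace ℝ E := .restrictScalars ℝ 𝕜 E
  have hlevel := hV.isOpen_inter_preimage_of_fderiv_eq_zero
    (fun y hy => (hZ y hy).differentiableAt.differentiableWithinAt) (fun y hy => (hZ y hy).fderiv)
    {(φ (Y x))⁻¹ • Y x}
  filter_upwards [hlevel.mem_nhds ⟨⟨hx, hφ⟩, rfl⟩] with y ⟨⟨_, hy⟩, hZy⟩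
  calc (𝕜 ∙ Y y) = 𝕜 ∙ (φ (Y y))⁻¹ • Y y := (span_singleton_smul_eq (by simpa using hy) _).symm
    _ = 𝕜 ∙ (φ (Y x))⁻¹ • Y x := congrArg (𝕜 ∙ ·) hZy
    _ = 𝕜 ∙ Y x := span_singleton_smul_eq (by simpa using hφ) _

theorem IsPreconnected.span_singleton_eq_of_fderiv_mem_span (hU : IsOpen U)
    (hUc : IsPreconnected U) (hY : DifferentiableOn 𝕜 Y U)
    (hY' : ∀ x ∈ U, ∀ w, fderiv 𝕜 Y x w ∈ 𝕜 ∙ Y x) (hY0 : ∀ x ∈ U, Y x ≠ 0) {x y : E}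
    (hx : x ∈ U) (hy : y ∈ U) :
    (𝕜 ∙ Y x) = (𝕜 ∙ Y y) :=
  hUc.induction₂ (fun x y => (𝕜 ∙ Y x) = (𝕜 ∙ Y y))
    (fun x hx => ((eventually_span_singleton_eq_of_fderiv_mem_span hU hY hY' hx
      (hY0 x hx)).mono fun _ h => h.symm).filter_mono nhdsWithin_le_nhds)
    (fun _ _ _ _ _ _ => Eq.trans) (fun _ _ _ _ => Eq.symm) hx hy

end

theorem Complex.map_mem_of_map_one_mem_of_map_I_mem {M : Type*} [AddCommGroup M] [Module ℝ M]
    {S : Submodule ℝ M} (L : ℂ →ₗ[ℝ] M) (h1 : L 1 ∈ S) (hI : L I ∈ S) (w : ℂ) : L w ∈ S := by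
  have hw : w = w.re • (1 : ℂ) + w.im • I := by simp
  rw [hw, map_add, map_smul, map_smul]
  exact add_mem (smul_mem _ _ h1) (smul_mem _ _ hI)

theorem stmt18_general (U : Set ℂ) (hU : IsOpen U) (hUconn : IsConnected U)
    (N : ℕ) (Y : ℂ → (Fin N → ℝ))
    (hY1 : ContDiffOn ℝ 1 Y U)
    (hY0 : ∀ p ∈ U, Y p ≠ 0)
    (r s : ℂ → ℝ)
    (hx : ∀ p ∈ U, fderiv ℝ Y p 1 = r p • Y p)
    (hy : ∀ p ∈ U, fderiv ℝ Y p Complex.I = s p • Y p) :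
    ∃ (v : Fin N → ℝ) (c : ℂ → ℝ), (∀ p ∈ U, c p ≠ 0) ∧ ∀ p ∈ U, Y p = c p • v := by
  obtain ⟨p₀, hp₀⟩ := hUconn.nonempty
  have hY' : ∀ p ∈ U, ∀ w, fderiv ℝ Y p w ∈ ℝ ∙ Y p := fun p hp =>
    Complex.map_mem_of_map_one_mem_of_map_I_mem (fderiv ℝ Y p : ℂ →ₗ[ℝ] Fin N → ℝ)
      (hx p hp ▸ smul_mem _ _ (mem_span_singleton_self _))
      (hy p hp ▸ smul_mem _ _ (mem_span_singleton_self _))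
  have hspan : ∀ p ∈ U, ∃ c : ℝˣ, c • Y p₀ = Y p := fun p hp =>
    span_singleton_eq_span_singleton.mp <|
      hUconn.isPreconnected.span_singleton_eq_of_fderiv_mem_span hU
        (hY1.differentiableOn one_ne_zero) hY' hY0 hp₀ hp
  choose! c hc using hspan
  exact ⟨Y p₀, fun p => c p, fun p _ => (c p).ne_zero, fun p hp => (hc p hp).symm⟩

/-- a nowhere-vanishing C¹ map `Y : U → ℝ^N` on an open connected set `U ⊆ ℂ ≅ ℝ²`
whose partial derivatives satisfy `∂Y/∂x = r·Y` and `∂Y/∂y = s·Y` has constant direction: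
`Y = c·v` for a fixed vector `v` and a nowhere-vanishing scalar function `c`. -/
theorem stmt18 (U : Set ℂ) (hU : IsOpen U) (hUconn : IsConnected U)
    (N : ℕ) (hN : 1 ≤ N) (Y : ℂ → (Fin N → ℝ))
    (hY1 : ContDiffOn ℝ 1 Y U)
    (hY0 : ∀ p ∈ U, Y p ≠ 0)
    (r s : ℂ → ℝ)
    (hx : ∀ p ∈ U, fderiv ℝ Y p 1 = r p • Y p)
    (hy : ∀ p ∈ U, fderiv ℝ Y p Complex.I = s p • Y p) :
    ∃ (v : Fin N → ℝ) (c : ℂ → ℝ), (∀ p ∈ U, c p ≠ 0) ∧ ∀ p ∈ U, Y p = c p • v :=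
  stmt18_general U hU hUconn N Y hY1 hY0 r s hx hy
end
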